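/- Let G be a finitely generated group which is not finitely presented (i.e., for no finite generating tuple A is the kernel of the canonical surjection F_A → G the normal closure of a finite set). Then for every nondecreasing function f with f ≪ 𝔦, G does not admit a quasigeodesic normal form satisfying the f(n)-fellow traveler property. Equivalently, if a finitely generated group admits a quasigeodesic normal form satisfying the f(n)-fellow traveler property for some f ≪ 𝔦, then it is finitely presented. -/

import Mathlib

/-- The alphabet `S = A ∪ A⁻¹` for a generating tuple of `m` elements:
a letter is a generator index together with a sign (`true` = the generator,
`false` = its inverse). -/
abbrev Letter (m : ℕ) := Fin m × Bool

/-- Evaluation of a letter in the group. -/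
def evalLetter {G : Type*} [Group G] {m : ℕ} (A : Fin m → G) (l : Letter m) : G :=
  if l.2 then A l.1 else (A l.1)⁻¹

/-- The canonical projection `π : S* → G`. -/
def wordEval {G : Type*} [Group G] {m : ℕ} (A : Fin m → G) (w : List (Letter m)) : G :=
  (w.map (evalLetter A)).prod

/-- The word metric `d_A` on `G` relative to `A`. -/
noncomputable def wordDist {G : Type*} [Group G] {m : ℕ} (A : Fin m → G) (g h : G) : ℕ :=
  sInf {n | ∃ w : List (Letter m), wordEval A w = g⁻¹ * h ∧ w.length = n}

/-- `L ⊆ S*` is a normal form of `G`: `π` restricted to `L` is a bijection onto `G`. -/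
def IsNormalForm {G : Type*} [Group G] {m : ℕ} (A : Fin m → G)
    (L : Set (List (Letter m))) : Prop :=
  ∀ g : G, ∃! w, w ∈ L ∧ wordEval A w = g

/-- The fellow-traveler function `s(n)` of a normal form `L`. -/
noncomputable def ftFun {G : Type*} [Group G] {m : ℕ} (A : Fin m → G)
    (L : Set (List (Letter m))) (n : ℕ) : ℕ :=
  sSup {d | ∃ t ≤ n, ∃ w₁ ∈ L, ∃ w₂ ∈ L, ∃ i : Fin m,
    wordEval A w₁ * A i = wordEval A w₂ ∧
    d = wordDist A (wordEval A (w₁.take t)) (wordEval A (w₂.take t))}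

/-- `h ⪯ f` : there are positive integers `K, M` and `N₀ ≥ 0` with
`h n ≤ K * f (M * n)` for all `n ≥ N₀`. -/
def FPreceq (h f : ℕ → ℝ) : Prop :=
  ∃ K M N₀ : ℕ, 0 < K ∧ 0 < M ∧ ∀ n ≥ N₀, h n ≤ (K : ℝ) * f (M * n)

/-- `h ≪ f` : there is an unbounded nondecreasing nonnegative function `t`
with `h·t ⪯ f`. -/
def FLl (h f : ℕ → ℝ) : Prop :=
  ∃ t : ℕ → ℝ, Monotone t ∧ (∀ n, 0 ≤ t n) ∧ (∀ C : ℝ, ∃ n, C < t n) ∧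
    FPreceq (fun n => h n * t n) f

/-- A normal form is quasigeodesic if `|w| ≤ C (d_A(π(w)) + 1)` for all `w ∈ L`. -/
def Quasigeodesic {G : Type*} [Group G] {m : ℕ} (A : Fin m → G)
    (L : Set (List (Letter m))) : Prop :=
  ∃ C : ℝ, 0 < C ∧ ∀ w ∈ L, (w.length : ℝ) ≤ C * ((wordDist A 1 (wordEval A w) : ℝ) + 1)

/-- A normal form is quasiregular with constant `c` if every prefix of a word of `L`
can be extended by a word of length at most `c` to a word of `L`. -/
def Quasiregular {m : ℕ} (L : Set (List (Letter m))) (c : ℕ) : Prop :=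
  ∀ w ∈ L, ∀ u : List (Letter m), u <+: w → ∃ x : List (Letter m), x.length ≤ c ∧ u ++ x ∈ L

/-- A normal form is quasiprefix-closed with constant `C`. -/
def QuasiPrefixClosed {m : ℕ} (L : Set (List (Letter m))) (C : ℕ) : Prop :=
  ∀ u v : List (Letter m), u ++ v ∈ L →
    ∃ x : List (Letter m), x <+: v ∧ x.length ≤ C ∧ u ++ x ∈ L

/-- A language is prefix-closed. -/
def PrefixClosed {m : ℕ} (L : Set (List (Letter m))) : Prop :=
  ∀ w ∈ L, ∀ u : List (Letter m), u <+: w → u ∈ L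

/-!
Let `L` be a quasigeodesic normal form whose fellow-traveler function `s` satisfies
`s ⪯ f ≪ 𝔦`, so `s(n) = o(n)`. Walk along a relation `w` of length `n`: consecutive
prefixes have normal forms of length `O(n)` that differ by one generator, and by the
fellow-traveler property they are joined by a ladder whose rungs have length at most
`s(O(n))`. Every cell of the ladder is a relation of length at most `2 s(O(n)) + 2 < n`,
so `w` lies in the normal closure of strictly shorter relations. By induction all
relations are consequences of the finitely many relations of bounded length.
-/

open Filter Asymptotics Subgroup
open FreeGroup (mk lift invRev invRev_length norm_mk_le)

section Words

variable {G : Type*} [Group G] {m : ℕ} (A : Fin m → G)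

@[simp] lemma wordEval_nil : wordEval A ([] : List (Letter m)) = 1 := rfl

@[simp] lemma wordEval_append (u v : List (Letter m)) :
    wordEval A (u ++ v) = wordEval A u * wordEval A v := by
  simp [wordEval]

@[simp] lemma wordEval_singleton (a : Letter m) : wordEval A [a] = evalLetter A a := by
  simp [wordEval]

lemma lift_mk_eq_wordEval (w : List (Letter m)) : lift A (mk w) = wordEval A w := by
  rw [FreeGroup.lift_mk, wordEval]
  congr 2 with ⟨i, _ | _⟩ <;> rfl

lemma wordEval_invRev (w : List (Letter m)) : wordEval A (invRev w) = (wordEval A w)⁻¹ := by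
  rw [← lift_mk_eq_wordEval, ← FreeGroup.inv_mk, _root_.map_inv, lift_mk_eq_wordEval]

lemma lift_surjective_of_surjective_wordEval (hsurj : Function.Surjective (wordEval A)) :
    Function.Surjective (lift A) := fun g =>
  let ⟨w, hw⟩ := hsurj g
  ⟨mk w, by rw [lift_mk_eq_wordEval, hw]⟩

variable {A}

lemma wordDist_le_length {g h : G} {w : List (Letter m)} (hw : wordEval A w = g⁻¹ * h) :
    wordDist A g h ≤ w.length :=
  Nat.sInf_le ⟨w, hw, rfl⟩

lemma exists_length_eq_wordDist (hsurj : Function.Surjective (wordEval A)) (g h : G) :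
    ∃ w : List (Letter m), wordEval A w = g⁻¹ * h ∧ w.length = wordDist A g h := by
  obtain ⟨w, hw⟩ := hsurj (g⁻¹ * h)
  exact Nat.sInf_mem (⟨_, w, hw, rfl⟩ : Set.Nonempty {n | ∃ w : List (Letter m),
    wordEval A w = g⁻¹ * h ∧ w.length = n})

lemma wordDist_le_length_add_length (u v : List (Letter m)) :
    wordDist A (wordEval A u) (wordEval A v) ≤ u.length + v.length := by
  refine (wordDist_le_length (w := invRev u ++ v) ?_).trans_eq ?_
  · rw [wordEval_append, wordEval_invRev]
  · rw [List.length_append, invRev_length]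

lemma wordDist_comm (hsurj : Function.Surjective (wordEval A)) (g h : G) :
    wordDist A g h = wordDist A h g := by
  suffices key : ∀ g h : G, wordDist A h g ≤ wordDist A g h from
    le_antisymm (key h g) (key g h)
  intro g h
  obtain ⟨w, hw, hlen⟩ := exists_length_eq_wordDist hsurj g h
  refine (wordDist_le_length (w := invRev w) ?_).trans_eq (by rw [invRev_length, hlen])
  rw [wordEval_invRev, hw, mul_inv_rev, inv_inv]

lemma length_le_of_quasigeodesic {L : Set (List (Letter m))} {C : ℕ}
    (hC : ∀ w ∈ L, w.length ≤ C * (wordDist A 1 (wordEval A w) + 1))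
    {u x : List (Letter m)} (hu : u ∈ L) (hx : wordEval A x = wordEval A u) :
    u.length ≤ C * (x.length + 1) :=
  (hC u hu).trans <| by
    gcongr
    exact wordDist_le_length (by rw [inv_one, one_mul, hx])

lemma Quasigeodesic.exists_nat {L : Set (List (Letter m))} (hL : Quasigeodesic A L) :
    ∃ C : ℕ, 0 < C ∧ ∀ w ∈ L, w.length ≤ C * (wordDist A 1 (wordEval A w) + 1) := by
  obtain ⟨C, hC, hbound⟩ := hL
  refine ⟨⌈C⌉₊, Nat.ceil_pos.2 hC, fun w hw => ?_⟩
  have := (hbound w hw).trans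
    (mul_le_mul_of_nonneg_right (Nat.le_ceil C) (by positivity))
  exact_mod_cast this

end Words

section FellowTravel

variable {G : Type*} [Group G] {m : ℕ} {A : Fin m → G}

variable (A) in
def FellowTravel (D : ℕ) (u v : List (Letter m)) : Prop :=
  ∀ j, wordDist A (wordEval A (u.take j)) (wordEval A (v.take j)) ≤ D

lemma fellowTravel_ftFun (hsurj : Function.Surjective (wordEval A))
    {L : Set (List (Letter m))} {u v : List (Letter m)} {a : Letter m} {n : ℕ}
    (hu : u ∈ L) (hv : v ∈ L) (ha : wordEval A u * evalLetter A a = wordEval A v)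
    (hun : u.length ≤ n) (hvn : v.length ≤ n) :
    FellowTravel A (ftFun A L n) u v := by
  intro j
  obtain ⟨t, htn, hut, hvt⟩ : ∃ t ≤ n, u.take j = u.take t ∧ v.take j = v.take t := by
    by_cases hj : j ≤ n
    · exact ⟨j, hj, rfl, rfl⟩
    · refine ⟨n, le_rfl, ?_, ?_⟩ <;>
        rw [List.take_of_length_le (by omega), List.take_of_length_le (by omega)]
  have hbdd : BddAbove {d | ∃ t ≤ n, ∃ w₁ ∈ L, ∃ w₂ ∈ L, ∃ i : Fin m,
      wordEval A w₁ * A i = wordEval A w₂ ∧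
      d = wordDist A (wordEval A (w₁.take t)) (wordEval A (w₂.take t))} := by
    refine ⟨n + n, ?_⟩
    rintro d ⟨t, ht, w₁, -, w₂, -, -, -, rfl⟩
    refine (wordDist_le_length_add_length _ _).trans (add_le_add ?_ ?_) <;>
      exact (List.length_take_le _ _).trans ht
  rw [hut, hvt]
  refine le_csSup hbdd ?_
  obtain ⟨i, _ | _⟩ := a
  · refine ⟨t, htn, v, hv, u, hu, i, ?_, wordDist_comm hsurj _ _⟩
    rw [← ha, evalLetter, if_neg Bool.false_ne_true, inv_mul_cancel_right]
  · exact ⟨t, htn, u, hu, v, hv, i, ha, rfl⟩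

end FellowTravel

section Relators

variable {G : Type*} [Group G] {m : ℕ} {A : Fin m → G}

variable (A) in
def shortRelators (r : ℕ) : Set (FreeGroup (Fin m)) :=
  {g | lift A g = 1 ∧ g.norm ≤ r}

lemma finite_shortRelators (r : ℕ) : (shortRelators A r).Finite :=
  ((List.finite_length_le _ r).preimage FreeGroup.toWord_injective.injOn).subset fun _ hg => hg.2

lemma mul_inv_mem_normalClosure_shortRelators {g h : FreeGroup (Fin m)} {r : ℕ}
    (he : lift A g = lift A h) (hn : g.norm + h.norm ≤ r) :
    g * h⁻¹ ∈ normalClosure (shortRelators A r) :=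
  subset_normalClosure
    ⟨by rw [_root_.map_mul, _root_.map_inv, he, mul_inv_cancel],
      (FreeGroup.norm_mul_le _ _).trans (by rwa [FreeGroup.norm_inv_eq])⟩

/-- The rungs of the ladder are geodesics `p j` from `u(j)` to `v(j)`; the cell between
rungs `j` and `j + 1` is `x · p (j + 1) · y⁻¹ · (p j)⁻¹`, where `x` and `y` are the
`(j + 1)`-st letters of `u` and `v`, so it has length at most `2 D + 2`. -/
theorem FellowTravel.mk_mul_mk_mul_inv_mem (hsurj : Function.Surjective (wordEval A))
    {u v : List (Letter m)} {a : Letter m} {D : ℕ}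
    (ha : wordEval A u * evalLetter A a = wordEval A v) (hD : FellowTravel A D u v) :
    mk u * mk [a] * (mk v)⁻¹ ∈ normalClosure (shortRelators A (2 * D + 2)) := by
  set R := normalClosure (shortRelators A (2 * D + 2))
  choose p hp hpl using fun j =>
    exists_length_eq_wordDist hsurj (wordEval A (u.take j)) (wordEval A (v.take j))
  have hpD : ∀ j, (mk (p j)).norm ≤ D := fun j => norm_mk_le.trans ((hpl j).trans_le (hD j))
  have rung : ∀ j, mk (u.take j) * mk (p j) * (mk (v.take j))⁻¹ ∈ R := by
    intro j
    induction j with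
    | zero =>
      simpa using mul_inv_mem_normalClosure_shortRelators (A := A) (g := mk (p 0)) (h := 1)
        (by rw [lift_mk_eq_wordEval, hp, List.take_zero, List.take_zero, wordEval_nil,
          inv_one, one_mul, _root_.map_one])
        (by simpa using (hpD 0).trans (by omega : D ≤ 2 * D + 2))
    | succ j ih =>
      have hcell : mk ((u.drop j).take 1) * mk (p (j + 1)) *
          (mk (p j) * mk ((v.drop j).take 1))⁻¹ ∈ R := by
        refine mul_inv_mem_normalClosure_shortRelators ?_ ?_
        · simp only [_root_.map_mul, lift_mk_eq_wordEval, hp, List.take_add, wordEval_append]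
          group
        · have hx := (List.length_take_le 1 (u.drop j)).trans' norm_mk_le
          have hy := (List.length_take_le 1 (v.drop j)).trans' norm_mk_le
          grw [FreeGroup.norm_mul_le, FreeGroup.norm_mul_le, hx, hy, hpD, hpD]
          omega
      rw [List.take_add, List.take_add, ← FreeGroup.mul_mk, ← FreeGroup.mul_mk]
      convert mul_mem ((normalClosure_normal).conj_mem _ hcell (mk (u.take j))) ih using 1
      group
  have hlast : mk [a] * (mk (p (max u.length v.length)))⁻¹ ∈ R := by
    refine mul_inv_mem_normalClosure_shortRelators ?_ ?_
    · rw [lift_mk_eq_wordEval, lift_mk_eq_wordEval, hp, List.take_of_length_le (by omega),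
        List.take_of_length_le (by omega), ← ha, wordEval_singleton, inv_mul_cancel_left]
    · grw [hpD, norm_mk_le]
      simp only [List.length_singleton]
      omega
  have hT := rung (max u.length v.length)
  rw [List.take_of_length_le (by omega), List.take_of_length_le (by omega)] at hT
  convert mul_mem ((normalClosure_normal).conj_mem _ hlast (mk u)) hT using 1
  group

end Relators

section Presentation

variable {G : Type*} [Group G] {m : ℕ} {A : Fin m → G}

theorem mk_mem_normalClosure_shortRelators_ftFun {L : Set (List (Letter m))}
    (hL : ∀ g : G, ∃ w ∈ L, wordEval A w = g) {C : ℕ}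
    (hC : ∀ w ∈ L, w.length ≤ C * (wordDist A 1 (wordEval A w) + 1))
    {w : List (Letter m)} (hw : wordEval A w = 1) :
    mk w ∈ normalClosure (shortRelators A (2 * ftFun A L (C * (w.length + 1)) + 2)) := by
  have hsurj : Function.Surjective (wordEval A) := fun g => (hL g).imp fun _ => And.right
  choose nf hnfL hnf using hL
  set n := w.length
  set R := normalClosure (shortRelators A (2 * ftFun A L (C * (n + 1)) + 2))
  have hlen : ∀ x : List (Letter m), x.length ≤ n → (nf (wordEval A x)).length ≤ C * (n + 1) :=
    fun x hx => (length_le_of_quasigeodesic hC (hnfL _) (hnf _).symm).trans (by gcongr)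
  have key : ∀ x : List (Letter m), x.length ≤ n →
      mk (nf 1) * mk x * (mk (nf (wordEval A x)))⁻¹ ∈ R := by
    intro x
    induction x using List.reverseRecOn with
    | nil =>
      intro _
      rw [wordEval_nil, ← FreeGroup.one_eq_mk, mul_one, mul_inv_cancel]
      exact R.one_mem
    | append_singleton x a ih =>
      intro hxa
      have hx : x.length ≤ n := by simp at hxa; omega
      have ha : wordEval A (nf (wordEval A x)) * evalLetter A a =
          wordEval A (nf (wordEval A (x ++ [a]))) := by
        rw [hnf, hnf, wordEval_append, wordEval_singleton]
      have hstep := (fellowTravel_ftFun hsurj (hnfL _) (hnfL _) ha (hlen x hx)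
        (hlen _ hxa)).mk_mul_mk_mul_inv_mem hsurj ha
      convert mul_mem (ih hx) hstep using 1
      rw [← FreeGroup.mul_mk]
      group
  have hconj := (normalClosure_normal (s := shortRelators A _)).conj_mem _ (key w le_rfl)
    (mk (nf 1))⁻¹
  rw [hw] at hconj
  convert hconj using 1
  group

theorem mk_mem_normalClosure_shortRelators_of_shorter {r : ℕ → ℕ} {N : ℕ}
    (hr : ∀ n ≥ N, r n < n)
    (hred : ∀ w : List (Letter m), wordEval A w = 1 →
      mk w ∈ normalClosure (shortRelators A (r w.length)))
    (w : List (Letter m)) (hw : wordEval A w = 1) :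
    mk w ∈ normalClosure (shortRelators A N) := by
  induction hn : w.length using Nat.strong_induction_on generalizing w with
  | _ n ih =>
  by_cases hwN : w.length ≤ N
  · exact subset_normalClosure ⟨by rwa [lift_mk_eq_wordEval], norm_mk_le.trans hwN⟩
  refine normalClosure_le_normal (fun g hg => ?_) (hred w hw)
  have := ih g.toWord.length (hn ▸ hg.2.trans_lt (hr _ (by omega))) g.toWord
    (by rw [← lift_mk_eq_wordEval, FreeGroup.mk_toWord, hg.1]) rfl
  rwa [FreeGroup.mk_toWord] at this

theorem ker_lift_eq_normalClosure {T : Set (FreeGroup (Fin m))}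
    (hT : T ⊆ (lift A).ker)
    (h : ∀ w : List (Letter m), wordEval A w = 1 → mk w ∈ normalClosure T) :
    (lift A).ker = normalClosure T := by
  refine le_antisymm (fun g hg => ?_) (normalClosure_le_normal hT)
  rw [← FreeGroup.mk_toWord (x := g)]
  exact h _ (by rw [← lift_mk_eq_wordEval, FreeGroup.mk_toWord]; exact hg)

end Presentation

section Growth

theorem FPreceq.trans_fLl {h f g : ℕ → ℝ} (hhf : FPreceq h f) (hfg : FLl f g)
    (h0 : ∀ n, 0 ≤ h n) : FLl h g := by
  obtain ⟨K, M, N, hK, hM, hb⟩ := hhf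
  obtain ⟨t, ht, ht0, htu, K', M', N', hK', hM', hb'⟩ := hfg
  refine ⟨t, ht, ht0, htu, K * K', M' * M, max N N', by positivity, by positivity,
    fun n hn => ?_⟩
  have hMn : n ≤ M * n := Nat.le_mul_of_pos_left n hM
  have hf0 : 0 ≤ f (M * n) := nonneg_of_mul_nonneg_right
    ((h0 n).trans (hb n (le_of_max_le_left hn))) (by positivity)
  calc h n * t n ≤ K * f (M * n) * t (M * n) :=
        mul_le_mul (hb n (le_of_max_le_left hn)) (ht hMn) (ht0 n) (by positivity)
    _ ≤ K * (K' * g (M' * (M * n))) := by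
        rw [mul_assoc]
        exact mul_le_mul_of_nonneg_left (hb' _ ((le_of_max_le_right hn).trans hMn))
          (by positivity)
    _ = ↑(K * K') * g (M' * M * n) := by push_cast; ring_nf

theorem FLl.isLittleO {h : ℕ → ℝ} (hh : FLl h fun n => (n : ℝ)) (h0 : ∀ n, 0 ≤ h n) :
    h =o[atTop] fun n => (n : ℝ) := by
  obtain ⟨t, ht, -, htu, K, M, N, hK, hM, hb⟩ := hh
  refine IsLittleO.of_bound fun c hc => ?_
  obtain ⟨n₁, hn₁⟩ := htu (K * M / c)
  filter_upwards [eventually_ge_atTop N, eventually_ge_atTop n₁] with n hnN hn₁n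
  rw [Real.norm_of_nonneg (h0 n), Real.norm_natCast]
  have hbound : h n * (K * M / c) ≤ K * M * n := by
    refine (mul_le_mul_of_nonneg_left (hn₁.trans_le (ht hn₁n)).le (h0 n)).trans ?_
    simpa [mul_assoc] using hb n hnN
  rw [mul_div_assoc', div_le_iff₀ hc] at hbound
  have hKM : (0 : ℝ) < K * M := by positivity
  nlinarith

theorem eventually_two_mul_add_two_lt {s : ℕ → ℕ}
    (hs : (fun n => (s n : ℝ)) =o[atTop] fun n => (n : ℝ)) {C : ℕ} (hC : 0 < C) :
    ∀ᶠ n in atTop, 2 * s (C * (n + 1)) + 2 < n := by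
  have htend : Tendsto (fun n => C * (n + 1)) atTop atTop :=
    tendsto_atTop_mono (fun n => (Nat.le_succ n).trans (Nat.le_mul_of_pos_left _ hC)) tendsto_id
  filter_upwards [htend.eventually (hs.bound (c := 1 / (8 * C)) (by positivity)),
    eventually_ge_atTop 4] with n hn hn4
  simp only [Real.norm_natCast] at hn
  have hC' : (0 : ℝ) < C := by exact_mod_cast hC
  have hsmall : (s (C * (n + 1)) : ℝ) ≤ (n + 1) / 8 := by
    convert hn using 1
    push_cast
    field_simp
  have hn4' : (4 : ℝ) ≤ n := by exact_mod_cast hn4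
  exact_mod_cast (by linarith : (2 * s (C * (n + 1)) + 2 : ℝ) < n)

end Growth

theorem no_quasigeodesic_of_not_finitelyPresented_general {G : Type*} [Group G]
    (hnfp : ∀ (k : ℕ) (B : Fin k → G), Function.Surjective (FreeGroup.lift B) →
      ¬ ∃ T : Set (FreeGroup (Fin k)), T.Finite ∧
          MonoidHom.ker (FreeGroup.lift B) = Subgroup.normalClosure T)
    {m : ℕ} (A : Fin m → G)
    (f : ℕ → ℝ)
    (hll : FLl f (fun n => (n : ℝ))) :
    ¬ ∃ L : Set (List (Letter m)),
        IsNormalForm A L ∧ Quasigeodesic A L ∧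
        FPreceq (fun n => (ftFun A L n : ℝ)) f := by
  rintro ⟨L, hNF, hQG, hFT⟩
  have hL : ∀ g : G, ∃ w ∈ L, wordEval A w = g := fun g => (hNF g).exists
  obtain ⟨C, hC, hCL⟩ := hQG.exists_nat
  have hs := (hFT.trans_fLl hll fun _ => Nat.cast_nonneg _).isLittleO fun _ => Nat.cast_nonneg _
  obtain ⟨N, hN⟩ := eventually_atTop.1 (eventually_two_mul_add_two_lt hs hC)
  have hrel := mk_mem_normalClosure_shortRelators_of_shorter hN
    fun w hw => mk_mem_normalClosure_shortRelators_ftFun hL hCL hw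
  exact hnfp m A (lift_surjective_of_surjective_wordEval A fun g => (hL g).imp fun _ => And.right)
    ⟨shortRelators A N, finite_shortRelators N, ker_lift_eq_normalClosure (fun _ hg => hg.1) hrel⟩

/-- Let `G` be a finitely generated group which is not finitely presented: for no
finite generating tuple `B` is the kernel of the canonical surjection `F_B → G` the
normal closure of a finite set.  Then for every nondecreasing function `f` with
`f ≪ 𝔦`, `G` does not admit a quasigeodesic normal form satisfying the
`f(n)`-fellow traveler property. -/
theorem no_quasigeodesic_of_not_finitelyPresented {G : Type*} [Group G]
    (hfg : ∃ (k : ℕ) (B : Fin k → G), Function.Surjective (FreeGroup.lift B))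
    (hnfp : ∀ (k : ℕ) (B : Fin k → G), Function.Surjective (FreeGroup.lift B) →
      ¬ ∃ T : Set (FreeGroup (Fin k)), T.Finite ∧
          MonoidHom.ker (FreeGroup.lift B) = Subgroup.normalClosure T)
    {m : ℕ} (A : Fin m → G)
    (f : ℕ → ℝ) (hmono : Monotone f) (hnonneg : ∀ n, 0 ≤ f n)
    (hll : FLl f (fun n => (n : ℝ))) :
    ¬ ∃ L : Set (List (Letter m)),
        IsNormalForm A L ∧ Quasigeodesic A L ∧
        FPreceq (fun n => (ftFun A L n : ℝ)) f :=
  no_quasigeodesic_of_not_finitelyPresented_general hnfp A f hll
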